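/- Let S be a finite set of points in ℝ² partitioned into cells S = ∪_{0≤i,j<m} S_{ij}, where the partition is induced by strips: there are reals ξ₀ ≤ … ≤ ξ_m and η₀ ≤ … ≤ η_m such that every p ∈ S_{ij} satisfies ξ_i ≤ p_x ≤ ξ_{i+1} and η_j ≤ p_y ≤ η_{j+1}, and points in different vertical strips are separated in x (if p ∈ S_{ij}, q ∈ S_{i'j'} with i < i' then p_x ≤ q_x) and similarly for horizontal strips in y. Write S_{i·} = ∪_j S_{ij} and S_{·j} = ∪_i S_{ij}. Then w(S) = (1/2)·Σ_{i,j} [ w_x(S_{ij}, S∖S_{i·}) + w_y(S_{ij}, S∖S_{·j}) ] + Σ_i w_x(S_{i·}) + Σ_j w_y(S_{·j}); i.e., the weight of S decomposes into cross-strip distances plus intra-strip x- and y-weights. -/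

import Mathlib

open Finset
open scoped Classical

/-- The L1 (Manhattan) distance between two points of the plane. -/
noncomputable def dist1 (p q : Fin 2 → ℝ) : ℝ := ∑ i, |p i - q i|

/-- The sum of L1 distances over all unordered pairs of distinct points of `S`. -/
noncomputable def w (S : Finset (Fin 2 → ℝ)) : ℝ := (∑ p ∈ S, ∑ q ∈ S, dist1 p q) / 2

/-- The sum of x-coordinate distances over all unordered pairs of distinct points of `S`. -/
noncomputable def wx (S : Finset (Fin 2 → ℝ)) : ℝ := (∑ p ∈ S, ∑ q ∈ S, |p 0 - q 0|) / 2

/-- The sum of y-coordinate distances over all unordered pairs of distinct points of `S`. -/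
noncomputable def wy (S : Finset (Fin 2 → ℝ)) : ℝ := (∑ p ∈ S, ∑ q ∈ S, |p 1 - q 1|) / 2

/-- `w_x(S,T) = Σ_{p∈S, q∈T} |p_x − q_x|` (sum over ordered pairs). -/
noncomputable def wxp (S T : Finset (Fin 2 → ℝ)) : ℝ := ∑ p ∈ S, ∑ q ∈ T, |p 0 - q 0|

/-- `w_y(S,T) = Σ_{p∈S, q∈T} |p_y − q_y|` (sum over ordered pairs). -/
noncomputable def wyp (S T : Finset (Fin 2 → ℝ)) : ℝ := ∑ p ∈ S, ∑ q ∈ T, |p 1 - q 1|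

/-! Split the L1 distance into its x- and y-parts. Sort the ordered pairs of `S × S` by the
vertical strip of their first point for the x-part (by the horizontal strip for the y-part): pairs
inside one strip give the intra-strip weights, and a pair leaving its strip is counted once from
either end, whence the factor `1 / 2`. -/

theorem Finset.sum_sum_biUnion_eq_sum_sdiff_add_sum_within {ι α M : Type*} [DecidableEq α]
    [AddCommMonoid M] {s : Finset ι} {R : ι → Finset α} (hR : (s : Set ι).PairwiseDisjoint R)
    (d : α → α → M) :
    ∑ p ∈ s.biUnion R, ∑ q ∈ s.biUnion R, d p q =
      ∑ i ∈ s, ∑ p ∈ R i, ∑ q ∈ s.biUnion R \ R i, d p q +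
        ∑ i ∈ s, ∑ p ∈ R i, ∑ q ∈ R i, d p q := by
  rw [sum_biUnion hR, ← sum_add_distrib]
  refine sum_congr rfl fun i hi => ?_
  rw [← sum_add_distrib]
  exact sum_congr rfl fun p _ => (sum_sdiff (subset_biUnion_of_mem R hi)).symm

theorem w_eq_wx_add_wy (S : Finset (Fin 2 → ℝ)) : w S = wx S + wy S := by
  simp only [w, wx, wy, dist1, Fin.sum_univ_two, sum_add_distrib, add_div]

theorem wx_biUnion {ι : Type*} {s : Finset ι} {R : ι → Finset (Fin 2 → ℝ)}
    (hR : (s : Set ι).PairwiseDisjoint R) :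
    wx (s.biUnion R) = 1 / 2 * ∑ i ∈ s, wxp (R i) (s.biUnion R \ R i) + ∑ i ∈ s, wx (R i) := by
  rw [wx, sum_sum_biUnion_eq_sum_sdiff_add_sum_within hR]
  simp only [wx, wxp, one_div_mul_eq_div, add_div, sum_div]

theorem wy_biUnion {ι : Type*} {s : Finset ι} {R : ι → Finset (Fin 2 → ℝ)}
    (hR : (s : Set ι).PairwiseDisjoint R) :
    wy (s.biUnion R) = 1 / 2 * ∑ i ∈ s, wyp (R i) (s.biUnion R \ R i) + ∑ i ∈ s, wy (R i) := by
  rw [wy, sum_sum_biUnion_eq_sum_sdiff_add_sum_within hR]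
  simp only [wy, wyp, one_div_mul_eq_div, add_div, sum_div]

theorem wxp_biUnion_left {ι : Type*} {s : Finset ι} {R : ι → Finset (Fin 2 → ℝ)}
    (hR : (s : Set ι).PairwiseDisjoint R) (T : Finset (Fin 2 → ℝ)) :
    wxp (s.biUnion R) T = ∑ i ∈ s, wxp (R i) T :=
  sum_biUnion hR

theorem wyp_biUnion_left {ι : Type*} {s : Finset ι} {R : ι → Finset (Fin 2 → ℝ)}
    (hR : (s : Set ι).PairwiseDisjoint R) (T : Finset (Fin 2 → ℝ)) :
    wyp (s.biUnion R) T = ∑ i ∈ s, wyp (R i) T :=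
  sum_biUnion hR

theorem biUnion_range_comm {α : Type*} [DecidableEq α] (m : ℕ) (Sc : ℕ → ℕ → Finset α) :
    ((range m).biUnion fun i => (range m).biUnion fun j => Sc i j) =
      (range m).biUnion fun j => (range m).biUnion fun i => Sc i j := by
  ext x
  simp only [mem_biUnion]
  constructor <;> rintro ⟨a, ha, b, hb, hx⟩ <;> exact ⟨b, hb, a, ha, hx⟩

section Grid

variable {α : Type*} {m : ℕ} {Sc : ℕ → ℕ → Finset α}

theorem pairwiseDisjoint_row (hdisj : ∀ i < m, ∀ j < m, ∀ i' < m, ∀ j' < m,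
      (i, j) ≠ (i', j') → Disjoint (Sc i j) (Sc i' j')) {i : ℕ} (hi : i < m) :
    (range m : Set ℕ).PairwiseDisjoint (Sc i) :=
  fun j hj j' hj' hne => hdisj i hi j (by simpa using hj) i hi j' (by simpa using hj')
    (by simp [hne])

theorem pairwiseDisjoint_column (hdisj : ∀ i < m, ∀ j < m, ∀ i' < m, ∀ j' < m,
      (i, j) ≠ (i', j') → Disjoint (Sc i j) (Sc i' j')) {j : ℕ} (hj : j < m) :
    (range m : Set ℕ).PairwiseDisjoint fun i => Sc i j :=
  fun i hi i' hi' hne => hdisj i (by simpa using hi) j hj i' (by simpa using hi') j hj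
    (by simp [hne])

variable [DecidableEq α]

theorem pairwiseDisjoint_rows (hdisj : ∀ i < m, ∀ j < m, ∀ i' < m, ∀ j' < m,
      (i, j) ≠ (i', j') → Disjoint (Sc i j) (Sc i' j')) :
    (range m : Set ℕ).PairwiseDisjoint fun i => (range m).biUnion (Sc i) := by
  intro i hi i' hi' hne
  simp only [Function.onFun, disjoint_biUnion_left, disjoint_biUnion_right, mem_range]
  exact fun j hj j' hj' => hdisj i (by simpa using hi) j' hj' i' (by simpa using hi') j hj
    (by simp [hne])

theorem pairwiseDisjoint_columns (hdisj : ∀ i < m, ∀ j < m, ∀ i' < m, ∀ j' < m,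
      (i, j) ≠ (i', j') → Disjoint (Sc i j) (Sc i' j')) :
    (range m : Set ℕ).PairwiseDisjoint fun j => (range m).biUnion fun i => Sc i j := by
  intro j hj j' hj' hne
  simp only [Function.onFun, disjoint_biUnion_left, disjoint_biUnion_right, mem_range]
  exact fun i hi i' hi' => hdisj i' hi' j (by simpa using hj) i hi j' (by simpa using hj')
    (by simp [hne])

end Grid

theorem weight_decomposition
    (m : ℕ)
    (Sc : ℕ → ℕ → Finset (Fin 2 → ℝ))
    (S : Finset (Fin 2 → ℝ))
    (hunion : S = (Finset.range m).biUnion fun i =>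
      (Finset.range m).biUnion fun j => Sc i j)
    (hdisj : ∀ i < m, ∀ j < m, ∀ i' < m, ∀ j' < m,
      (i, j) ≠ (i', j') → Disjoint (Sc i j) (Sc i' j')) :
    w S =
      (1 / 2) * ∑ i ∈ Finset.range m, ∑ j ∈ Finset.range m,
        (wxp (Sc i j) (S \ ((Finset.range m).biUnion fun j' => Sc i j')) +
         wyp (Sc i j) (S \ ((Finset.range m).biUnion fun i' => Sc i' j))) +
      ∑ i ∈ Finset.range m, wx ((Finset.range m).biUnion fun j' => Sc i j') +
      ∑ j ∈ Finset.range m, wy ((Finset.range m).biUnion fun i' => Sc i' j) := by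
  have hx := wx_biUnion (pairwiseDisjoint_rows hdisj)
  have hy := wy_biUnion (pairwiseDisjoint_columns hdisj)
  rw [← hunion] at hx
  rw [← biUnion_range_comm, ← hunion] at hy
  have hcross_x : ∀ i ∈ range m, wxp ((range m).biUnion (Sc i)) (S \ (range m).biUnion (Sc i)) =
      ∑ j ∈ range m, wxp (Sc i j) (S \ (range m).biUnion (Sc i)) :=
    fun i hi => wxp_biUnion_left (pairwiseDisjoint_row hdisj (mem_range.1 hi)) _
  have hcross_y : ∀ j ∈ range m,
      wyp ((range m).biUnion fun i => Sc i j) (S \ (range m).biUnion fun i => Sc i j) =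
        ∑ i ∈ range m, wyp (Sc i j) (S \ (range m).biUnion fun i => Sc i j) :=
    fun j hj => wyp_biUnion_left (pairwiseDisjoint_column hdisj (mem_range.1 hj)) _
  rw [w_eq_wx_add_wy, hx, hy, sum_congr rfl hcross_x, sum_congr rfl hcross_y,
    sum_comm (s := range m) (t := range m) (f := fun j i => wyp (Sc i j) _)]
  simp only [sum_add_distrib]
  ring
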